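/- arXiv:2201.10507 — 2 statements merged into one kernel-verified Lean document; each statement's English description precedes it below -/
import Mathlib

section
/- Every matrix of finite order in GL(2,ℤ) with determinant -1 has order exactly 2, and is conjugate in GL(2,ℤ) to exactly one of the matrices [[1,0],[0,-1]] and [[0,1],[1,0]]. -/
/-!
If `A` has determinant `-1` and trace `t`, Cayley–Hamilton gives `A ^ 2 = t • A + 1`, so `A ^ 2`
has determinant `1` and trace `t ^ 2 + 2`. For `t ≠ 0` the traces of the powers of `A ^ 2` then
increase strictly, so `A` has infinite order. Hence `t = 0` and `A ^ 2 = 1`.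

A traceless `!![a, b; c, -a]` with `a * a + b * c = 1` is reduced by a Euclidean descent on `|c|`,
using shears and the swap of the coordinates, to `!![1, 0; 0, -1]` or `!![0, 1; 1, 0]`. These two
are not conjugate, since only the first is the identity modulo `2`.
-/

open Matrix

namespace Matrix

section CommRing

variable {R : Type*} [CommRing R]

theorem isConj_iff_exists_isUnit_det {n : Type*} [Fintype n] [DecidableEq n]
    {A B : Matrix n n R} :
    IsConj B A ↔ ∃ P : Matrix n n R, IsUnit P.det ∧ A = P * B * P⁻¹ := by
  constructor
  · rintro ⟨c, hc⟩
    refine ⟨c, (isUnit_iff_isUnit_det _).mp c.isUnit, ?_⟩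
    rw [← coe_units_inv, Units.eq_mul_inv_iff_mul_eq]
    exact hc.eq.symm
  · rintro ⟨P, hP, rfl⟩
    refine ⟨nonsingInvUnit P hP, ?_⟩
    change P * B = P * B * P⁻¹ * P
    rw [mul_assoc _ P⁻¹, nonsing_inv_mul _ hP, mul_one]

theorem isConj_of_mul_eq {n : Type*} [Fintype n] [DecidableEq n] {A B P : Matrix n n R}
    (hP : IsUnit P.det) (h : P * A = B * P) : IsConj A B :=
  ⟨nonsingInvUnit P hP, h⟩

theorem mul_self_fin_two (A : Matrix (Fin 2) (Fin 2) R) :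
    A * A = A.trace • A - A.det • 1 := by
  rw [eta_fin_two A]
  ext i j
  fin_cases i <;> fin_cases j <;> simp [trace_fin_two, det_fin_two] <;> ring

theorem trace_pow_add_two_of_det_eq_one {A : Matrix (Fin 2) (Fin 2) R} (hA : A.det = 1) (n : ℕ) :
    (A ^ (n + 2)).trace = A.trace * (A ^ (n + 1)).trace - (A ^ n).trace := by
  rw [pow_add, sq, mul_self_fin_two, hA, one_smul, mul_sub, mul_one, mul_smul_comm, trace_sub,
    trace_smul, ← pow_succ, smul_eq_mul]

theorem mul_self_eq_one_of_trace_eq_zero {A : Matrix (Fin 2) (Fin 2) R} (hdet : A.det = -1)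
    (htr : A.trace = 0) : A * A = 1 := by
  simp [mul_self_fin_two, hdet, htr]

theorem eq_of_trace_eq_zero {A : Matrix (Fin 2) (Fin 2) R} (h : A.trace = 0) :
    A = !![A 0 0, A 0 1; A 1 0, -A 0 0] := by
  rw [trace_fin_two, add_eq_zero_iff_eq_neg'] at h
  rw [← h]
  exact eta_fin_two A

theorem isConj_shear {a b c a' b' : R} (u : R) (ha : a' = a - u * c)
    (hb : b' = b + u * (2 * a - u * c)) : IsConj !![a, b; c, -a] !![a', b'; c, -a'] := by
  refine isConj_of_mul_eq (P := !![1, -u; 0, 1]) (by simp) ?_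
  subst ha hb
  ext i j
  fin_cases i <;> fin_cases j <;> simp <;> ring

theorem isConj_swap (a b c : R) : IsConj !![a, b; c, -a] !![-a, c; b, a] := by
  refine isConj_of_mul_eq (P := !![0, 1; 1, 0]) (by simp) ?_
  ext i j
  fin_cases i <;> fin_cases j <;> simp

theorem isConj_neg_off_diag (a b c : R) : IsConj !![a, b; c, -a] !![a, -b; -c, -a] := by
  refine isConj_of_mul_eq (P := !![1, 0; 0, -1]) (by simp) ?_
  ext i j
  fin_cases i <;> fin_cases j <;> simp

end CommRing

section Ordered

variable {R : Type*} [CommRing R] [LinearOrder R] [IsStrictOrderedRing R]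

theorem trace_pow_strictMono {A : Matrix (Fin 2) (Fin 2) R} (hdet : A.det = 1)
    (htr : 2 < A.trace) : StrictMono fun n : ℕ => (A ^ n).trace := by
  have key : ∀ n : ℕ, 0 < (A ^ n).trace ∧ (A ^ n).trace < (A ^ (n + 1)).trace := by
    intro n
    induction n with
    | zero => simpa using htr
    | succ n ih =>
      have hrec := trace_pow_add_two_of_det_eq_one hdet n
      have := mul_pos (sub_pos.mpr htr) (ih.1.trans ih.2)
      constructor <;> nlinarith
  exact strictMono_nat_of_lt_succ fun n => (key n).2

theorem pow_ne_one_of_two_lt_trace {A : Matrix (Fin 2) (Fin 2) R} (hdet : A.det = 1)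
    (htr : 2 < A.trace) {n : ℕ} (hn : n ≠ 0) : A ^ n ≠ 1 := by
  intro h
  simpa [h] using trace_pow_strictMono hdet htr (Nat.pos_of_ne_zero hn)

theorem trace_eq_zero_of_pow_eq_one {A : Matrix (Fin 2) (Fin 2) R} (hdet : A.det = -1)
    {n : ℕ} (hn : n ≠ 0) (hpow : A ^ n = 1) : A.trace = 0 := by
  by_contra htr
  have hsq : A ^ 2 = A.trace • A + 1 := by simp [sq, mul_self_fin_two, hdet]
  refine pow_ne_one_of_two_lt_trace (A := A ^ 2) ?_ ?_ hn ?_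
  · simp [hdet]
  · simpa [hsq, trace_add, mul_self_pos] using htr
  · rw [← pow_mul, mul_comm, pow_mul, hpow, one_pow]

end Ordered

end Matrix

theorem abs_lt_of_mul_self_add_mul_eq_one {R : Type*} [CommRing R] [LinearOrder R]
    [IsStrictOrderedRing R] {a b c : R} (h : a * a + b * c = 1) (ha : 0 ≤ a)
    (hac : a < |c|) (hc : 2 ≤ |c|) : |b| < |c| := by
  have hbc : |b| * |c| = |1 - a * a| := by rw [← abs_mul, ← h]; ring_nf
  by_contra! hle
  rcases abs_cases (1 - a * a) with ⟨he, -⟩ | ⟨he, -⟩ <;> nlinarith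

namespace Matrix

theorem isConj_diag_or_swap_of_mul_self_eq_one {a b : ℤ} (h : a * a = 1) :
    IsConj !![a, b; 0, -a] !![1, 0; 0, -1] ∨ IsConj !![a, b; 0, -a] !![0, 1; 1, 0] := by
  obtain ⟨k, rfl | rfl⟩ := b.even_or_odd'
  · rcases mul_self_eq_one_iff.mp h with rfl | rfl
    · exact .inl (isConj_shear (-k) (by ring) (by ring))
    · simpa using .inl ((isConj_shear k (a' := -1) (b' := 0) (by ring) (by ring)).trans
        (isConj_swap _ _ _))
  · right
    rcases mul_self_eq_one_iff.mp h with rfl | rfl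
    · refine (isConj_shear (-k) (a' := 1) (b' := 1) (by ring) (by ring)).trans
        (isConj_of_mul_eq (P := !![1, 0; 1, 1]) (by simp) ?_)
      ext i j
      fin_cases i <;> fin_cases j <;> simp
    · refine (isConj_shear k (a' := -1) (b' := 1) (by ring) (by ring)).trans
        (isConj_of_mul_eq (P := !![1, 0; -1, 1]) (by simp) ?_)
      ext i j
      fin_cases i <;> fin_cases j <;> simp

theorem isConj_diag_or_swap_of_mul_self_add_mul_eq_one (a b c : ℤ) (h : a * a + b * c = 1) :
    IsConj !![a, b; c, -a] !![1, 0; 0, -1] ∨ IsConj !![a, b; c, -a] !![0, 1; 1, 0] := by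
  induction hn : c.natAbs using Nat.strong_induction_on generalizing a b c with
  | _ n ih =>
  rcases eq_or_ne c 0 with rfl | hc
  · exact isConj_diag_or_swap_of_mul_self_eq_one (by simpa using h)
  -- Shearing `a` to `a % c` makes `|b| < |c|` once `|c| ≥ 2`; swapping `b` and `c` then descends.
  obtain ⟨a', b', hconj, h', ha'0, ha'c⟩ : ∃ a' b' : ℤ,
      IsConj !![a, b; c, -a] !![a', b'; c, -a'] ∧ a' * a' + b' * c = 1 ∧ 0 ≤ a' ∧ a' < |c| :=
    ⟨a % c, _, isConj_shear (a / c) (by rw [Int.emod_def]; ring) rfl,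
      by rw [Int.emod_def]; linear_combination h, Int.emod_nonneg a hc, Int.emod_lt_abs a hc⟩
  rcases (show |c| = 1 ∨ 2 ≤ |c| by have := abs_pos.mpr hc; omega) with hc1 | hc2
  · obtain rfl : a' = 0 := by omega
    rcases Int.eq_one_or_neg_one_of_mul_eq_one' (by simpa using h') with
      ⟨rfl, rfl⟩ | ⟨rfl, rfl⟩
    · exact .inr hconj
    · exact .inr (by simpa using hconj.trans (isConj_neg_off_diag _ _ _))
  · have hlt : b'.natAbs < n := by
      rw [← hn, ← Int.natAbs_abs c, ← Int.natAbs_abs b']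
      exact Int.natAbs_lt_natAbs_of_nonneg_of_lt (abs_nonneg _)
        (abs_lt_of_mul_self_add_mul_eq_one h' ha'0 ha'c hc2)
    have hswap := hconj.trans (isConj_swap a' b' c)
    have hrec := ih _ hlt (-a') c b' (by linear_combination h') rfl
    rw [neg_neg] at hrec
    exact hrec.imp hswap.trans hswap.trans

theorem not_isConj_diag_swap : ¬ IsConj !![(1 : ℤ), 0; 0, -1] !![0, 1; 1, 0] := by
  intro h
  have h2 := (Int.castRingHom (ZMod 2)).mapMatrix.toMonoidHom.map_isConj h
  have hD : (Int.castRingHom (ZMod 2)).mapMatrix !![(1 : ℤ), 0; 0, -1] = 1 := by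
    ext i j
    fin_cases i <;> fin_cases j <;> simp
  simp only [RingHom.toMonoidHom_eq_coe, MonoidHom.coe_coe, hD, isConj_one_right] at h2
  simpa using congrFun (congrFun h2 0) 0

theorem isConj_diag_or_swap {A : Matrix (Fin 2) (Fin 2) ℤ} (hdet : A.det = -1)
    (htr : A.trace = 0) : IsConj A !![1, 0; 0, -1] ∨ IsConj A !![0, 1; 1, 0] := by
  rw [eq_of_trace_eq_zero htr] at hdet ⊢
  refine isConj_diag_or_swap_of_mul_self_add_mul_eq_one _ _ _ ?_
  rw [det_fin_two_of] at hdet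
  linear_combination -hdet

end Matrix

/-- A finite-order element of GL(2,ℤ) with determinant -1 has order 2 and is conjugate
to exactly one of [[1,0],[0,-1]] and [[0,1],[1,0]]. -/
theorem stmt_4 (g : GL (Fin 2) ℤ) (hfin : ∃ m : ℕ, 0 < m ∧ g ^ m = 1)
    (hdet : (g : Matrix (Fin 2) (Fin 2) ℤ).det = -1) :
    orderOf g = 2 ∧
    Xor'
      (∃ P : Matrix (Fin 2) (Fin 2) ℤ, IsUnit P.det ∧
        (g : Matrix (Fin 2) (Fin 2) ℤ) = P * !![1, 0; 0, -1] * P⁻¹)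
      (∃ P : Matrix (Fin 2) (Fin 2) ℤ, IsUnit P.det ∧
        (g : Matrix (Fin 2) (Fin 2) ℤ) = P * !![0, 1; 1, 0] * P⁻¹) := by
  obtain ⟨m, hm, hgm⟩ := hfin
  have hpow : (g : Matrix (Fin 2) (Fin 2) ℤ) ^ m = 1 := by
    rw [← Units.val_pow_eq_pow_val, hgm, Units.val_one]
  have htr := trace_eq_zero_of_pow_eq_one hdet hm.ne' hpow
  refine ⟨orderOf_eq_prime ?_ ?_, ?_⟩
  · ext1
    simpa [sq] using mul_self_eq_one_of_trace_eq_zero hdet htr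
  · rintro rfl
    simp at hdet
  · simp only [← isConj_iff_exists_isUnit_det]
    refine (xor_iff_or_and_not_and _ _).mpr ⟨?_, fun ⟨hD, hS⟩ => ?_⟩
    · exact (isConj_diag_or_swap hdet htr).imp IsConj.symm IsConj.symm
    · exact not_isConj_diag_swap (hD.trans hS.symm)
end

section
/- The possible finite orders of elements of GL(3,ℤ) are exactly 1, 2, 3, 4, and 6. -/
open Polynomial

section Aux

lemma aux_pow_sub_one_kills (N : Matrix (Fin 3) (Fin 3) ℚ) (k : ℕ)
    (h : minpoly ℚ N ∣ X ^ k - 1) : N ^ k = 1 := by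
  obtain ⟨c, hc⟩ := h
  have h2 : aeval N ((X : ℚ[X]) ^ k - 1) = 0 := by
    rw [hc, map_mul, minpoly.aeval, zero_mul]
  simpa [sub_eq_zero] using h2

lemma aux_natDegree_minpoly_le (N : Matrix (Fin 3) (Fin 3) ℚ) :
    (minpoly ℚ N).natDegree ≤ 3 := by
  have h := Matrix.minpoly_dvd_charpoly N
  have h2 : N.charpoly.natDegree = 3 := by simp [Matrix.charpoly_natDegree_eq_dim]
  have := Polynomial.natDegree_le_of_dvd h (N.charpoly_monic.ne_zero)
  omega

lemma aux_mat_isIntegral (N : Matrix (Fin 3) (Fin 3) ℚ) : IsIntegral ℚ N :=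
  ⟨N.charpoly, N.charpoly_monic, N.aeval_self_charpoly⟩

lemma aux_minpoly_ne_zero (N : Matrix (Fin 3) (Fin 3) ℚ) : minpoly ℚ N ≠ 0 :=
  minpoly.ne_zero (aux_mat_isIntegral N)

lemma aux_cyclo_not_dvd_minpoly (N : Matrix (Fin 3) (Fin 3) ℚ) {m : ℕ}
    (hdeg : 3 < (cyclotomic m ℚ).natDegree) : ¬ cyclotomic m ℚ ∣ minpoly ℚ N := by
  intro h
  have := Polynomial.natDegree_le_of_dvd h (aux_minpoly_ne_zero N)
  have := aux_natDegree_minpoly_le N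
  omega

lemma aux_key_dvd (N : Matrix (Fin 3) (Fin 3) ℚ) {m : ℕ} (hm : 0 < m) (Q : ℚ[X])
    (hfac : (X : ℚ[X]) ^ m - 1 = cyclotomic m ℚ * Q)
    (hdeg : 3 < (cyclotomic m ℚ).natDegree)
    (hord : orderOf N = m) : minpoly ℚ N ∣ Q := by
  have hNm : N ^ m = 1 := by rw [← hord]; exact pow_orderOf_eq_one N
  have hdvd : minpoly ℚ N ∣ cyclotomic m ℚ * Q := by
    rw [← hfac]; exact minpoly.dvd ℚ N (by simp [hNm])
  have hirr := cyclotomic.irreducible_rat (n := m) hm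
  have hcop : IsCoprime (cyclotomic m ℚ) (minpoly ℚ N) :=
    hirr.coprime_iff_not_dvd.mpr (aux_cyclo_not_dvd_minpoly N hdeg)
  exact hcop.symm.dvd_of_dvd_mul_left hdvd

lemma aux_no_order_cyclo (N : Matrix (Fin 3) (Fin 3) ℚ) (m m' : ℕ) (hm : 0 < m)
    (hfac : (X : ℚ[X]) ^ m - 1 = cyclotomic m ℚ * ((X : ℚ[X]) ^ m' - 1))
    (hdeg : 3 < (cyclotomic m ℚ).natDegree)
    (hord : orderOf N = m) : m ∣ m' := by
  have h := aux_key_dvd N hm _ hfac hdeg hord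
  have := orderOf_dvd_of_pow_eq_one (aux_pow_sub_one_kills N m' h)
  rwa [hord] at this

lemma aux_no_order_12 (N : Matrix (Fin 3) (Fin 3) ℚ) : orderOf N ≠ 12 := by
  intro hord
  have h4 : (X:ℚ[X])^4 - 1 = cyclotomic 4 ℚ * ((X:ℚ[X])^2 - 1) := by
    have := cyclotomic_prime_pow_mul_X_pow_sub_one ℚ 2 1
    norm_num at this
    rw [← this]
  have hfac : (X:ℚ[X])^12 - 1 = cyclotomic 12 ℚ * (cyclotomic 4 ℚ * ((X:ℚ[X])^6 - 1)) := by
    rw [← prod_cyclotomic_eq_X_pow_sub_one (by norm_num : 0 < 6) ℚ,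
        ← prod_cyclotomic_eq_X_pow_sub_one (by norm_num : 0 < 12) ℚ]
    have h1 : Nat.divisors 12 = {1,2,3,6,4,12} := by decide
    have h2 : Nat.divisors 6 = {1,2,3,6} := by decide
    rw [h1, h2, show ({1,2,3,6,4,12} : Finset ℕ) = insert 4 (insert 12 {1,2,3,6}) by decide,
        Finset.prod_insert (by decide), Finset.prod_insert (by decide)]
    ring
  have hd12 : 3 < (cyclotomic 12 ℚ).natDegree := by rw [natDegree_cyclotomic]; decide
  have hdvd : minpoly ℚ N ∣ cyclotomic 4 ℚ * ((X:ℚ[X])^6 - 1) :=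
    aux_key_dvd N (by norm_num) _ hfac hd12 hord
  have not4 : ¬ (12 ∣ 4) := by decide
  have not6 : ¬ (12 ∣ 6) := by decide
  by_cases h : cyclotomic 4 ℚ ∣ minpoly ℚ N
  · obtain ⟨r, hr⟩ := h
    have hc4ne : cyclotomic 4 ℚ ≠ 0 := cyclotomic_ne_zero 4 ℚ
    have hrdvd : r ∣ (X:ℚ[X])^6 - 1 := by
      have h6 := hdvd; rw [hr] at h6
      exact (mul_dvd_mul_iff_left hc4ne).mp h6
    have hmon : (minpoly ℚ N).Monic := minpoly.monic (aux_mat_isIntegral N)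
    have hc4mon : (cyclotomic 4 ℚ).Monic := cyclotomic.monic 4 ℚ
    have hrmon : r.Monic := by
      rw [hr] at hmon
      exact hc4mon.of_mul_monic_left hmon
    have hdegr : r.natDegree ≤ 1 := by
      have h1 := aux_natDegree_minpoly_le N
      rw [hr, natDegree_mul hc4ne hrmon.ne_zero, natDegree_cyclotomic,
        (by decide : Nat.totient 4 = 2)] at h1
      omega
    have hrX2 : r ∣ (X:ℚ[X])^2 - 1 := by
      interval_cases hdr : r.natDegree
      · rw [hrmon.natDegree_eq_zero.mp hdr]
        exact one_dvd _
      · have hrX : r = X + C (r.coeff 0) := hrmon.eq_X_add_C hdr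
        set c := r.coeff 0
        obtain ⟨s, hs⟩ := hrdvd
        have hc6 : (-c)^6 - 1 = 0 := by
          have := congrArg (eval (-c)) hs
          simp [hrX] at this ⊢
          linarith [this]
        have hc2 : c^2 = 1 := by nlinarith [sq_nonneg (c^2-1), sq_nonneg (c^2+1), sq_nonneg c]
        refine ⟨X - C c, ?_⟩
        rw [hrX]
        have : (X + C c) * (X - C c) = X^2 - C (c^2) := by
          rw [map_pow]; ring
        rw [this, hc2]; simp
    have hmp4 : minpoly ℚ N ∣ (X:ℚ[X])^4 - 1 := by
      rw [h4, hr]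
      exact mul_dvd_mul_left _ hrX2
    have := orderOf_dvd_of_pow_eq_one (aux_pow_sub_one_kills N 4 hmp4)
    rw [hord] at this; exact not4 this
  · have hirr4 := cyclotomic.irreducible_rat (n := 4) (by norm_num)
    have hcop : IsCoprime (cyclotomic 4 ℚ) (minpoly ℚ N) := hirr4.coprime_iff_not_dvd.mpr h
    have h6 : minpoly ℚ N ∣ (X:ℚ[X])^6 - 1 := hcop.symm.dvd_of_dvd_mul_left hdvd
    have := orderOf_dvd_of_pow_eq_one (aux_pow_sub_one_kills N 6 h6)
    rw [hord] at this; exact not6 this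

lemma aux_nat_comb (n : ℕ) (h0 : 0 < n)
    (hp : ∀ p : ℕ, p.Prime → p ∣ n → p < 5)
    (h8 : ¬ 8 ∣ n) (h9 : ¬ 9 ∣ n) (h12 : ¬ 12 ∣ n) :
    n ∈ ({1, 2, 3, 4, 6} : Set ℕ) := by
  have hsub : n.primeFactors ⊆ {2, 3} := by
    intro p hpf
    obtain ⟨hpp, hpd, -⟩ := Nat.mem_primeFactors.mp hpf
    have h5 := hp p hpp hpd
    have h2 := hpp.two_le
    interval_cases p <;> simp_all <;> exact (by norm_num : ¬ Nat.Prime 4) hpp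
  set a := n.factorization 2 with ha'
  set b := n.factorization 3 with hb'
  have ha : a ≤ 2 := by
    by_contra hc
    exact h8 (dvd_trans (pow_dvd_pow 2 (by omega : 3 ≤ a)) (Nat.ordProj_dvd n 2))
  have hb : b ≤ 1 := by
    by_contra hc
    exact h9 (dvd_trans (pow_dvd_pow 3 (by omega : 2 ≤ b)) (Nat.ordProj_dvd n 3))
  have hn : n = 2 ^ a * 3 ^ b := by
    conv_lhs => rw [← Nat.factorization_prod_pow_eq_self h0.ne']
    rw [Finsupp.prod]
    rw [Nat.support_factorization]
    rw [Finset.prod_subset hsub (fun x _ hx => by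
      rw [Finsupp.notMem_support_iff.mp (by rwa [Nat.support_factorization]), pow_zero]),
      show ({2,3} : Finset ℕ) = insert 2 {3} from rfl,
      Finset.prod_insert (by decide), Finset.prod_singleton]
  rw [hn] at h12 ⊢
  interval_cases a <;> interval_cases b <;> revert h12 <;> norm_num

lemma aux_order_pow (M : Matrix (Fin 3) (Fin 3) ℚ) (n m : ℕ) (hn : orderOf M = n)
    (h : m ∣ n) (h0 : 0 < n) : orderOf (M ^ (n / m)) = m := by
  have hm : 0 < m := Nat.pos_of_dvd_of_pos h h0
  have hnd : 0 < n / m := Nat.div_pos (Nat.le_of_dvd h0 h) hm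
  rw [orderOf_pow' M hnd.ne', hn, Nat.gcd_eq_right (Nat.div_dvd_of_dvd h)]
  exact Nat.div_div_self h h0.ne'

noncomputable def auxφ : Matrix (Fin 3) (Fin 3) ℤ →+* Matrix (Fin 3) (Fin 3) ℚ :=
  (Int.castRingHom ℚ).mapMatrix

lemma auxφ_inj : Function.Injective auxφ := fun M N h => by
  ext i j
  have := congrFun (congrFun h i) j
  simpa [auxφ, RingHom.mapMatrix_apply, Matrix.map_apply] using this

lemma aux_order_transfer (g : GL (Fin 3) ℤ) :
    orderOf (((Units.map auxφ.toMonoidHom g : (Matrix (Fin 3) (Fin 3) ℚ)ˣ) :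
      Matrix (Fin 3) (Fin 3) ℚ)) = orderOf g := by
  rw [orderOf_units, orderOf_injective _ (Units.map_injective auxφ_inj)]

def auxA3 : GL (Fin 3) ℤ :=
  ⟨!![0,0,1;1,0,0;0,1,0], !![0,1,0;0,0,1;1,0,0], by decide, by decide⟩

def auxA4 : GL (Fin 3) ℤ :=
  ⟨!![0,-1,0;1,0,0;0,0,1], !![0,1,0;-1,0,0;0,0,1], by decide, by decide⟩

lemma aux_gl_pow_eq_one_iff (u : GL (Fin 3) ℤ) (k : ℕ) :
    u ^ k = 1 ↔ (u : Matrix (Fin 3) (Fin 3) ℤ) ^ k = 1 := by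
  rw [Units.ext_iff, Units.val_pow_eq_pow_val, Units.val_one]

end Aux

/-- The possible finite orders of elements of GL(3,ℤ) are exactly 1, 2, 3, 4, 6. -/
theorem stmt_6 :
    (∀ g : GL (Fin 3) ℤ, 0 < orderOf g → orderOf g ∈ ({1, 2, 3, 4, 6} : Set ℕ)) ∧
    (∀ n ∈ ({1, 2, 3, 4, 6} : Set ℕ), ∃ g : GL (Fin 3) ℤ, orderOf g = n) := by
  constructor
  · intro g hg
    set n := orderOf g with hn
    set M : Matrix (Fin 3) (Fin 3) ℚ :=
      ((Units.map auxφ.toMonoidHom g : (Matrix (Fin 3) (Fin 3) ℚ)ˣ) :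
        Matrix (Fin 3) (Fin 3) ℚ) with hM'
    have hM : orderOf M = n := aux_order_transfer g
    have hbig : ∀ p : ℕ, p.Prime → p ∣ n → p < 5 := by
      intro p hpp hpd
      by_contra h5
      push_neg at h5
      haveI := Fact.mk hpp
      have hordp : orderOf (M ^ (n / p)) = p := aux_order_pow M n p hM hpd hg
      have hdvd : p ∣ 1 := aux_no_order_cyclo _ p 1 hpp.pos
        (by rw [← cyclotomic_prime_mul_X_sub_one ℚ p, pow_one])
        (by rw [natDegree_cyclotomic, Nat.totient_prime hpp]; omega) hordp
      exact hpp.one_lt.ne' (Nat.dvd_one.mp hdvd)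
    have h8 : ¬ 8 ∣ n := by
      intro hd
      have hord : orderOf (M ^ (n / 8)) = 8 := aux_order_pow M n 8 hM hd hg
      have : (8 : ℕ) ∣ 4 := aux_no_order_cyclo _ 8 4 (by norm_num)
        (by
          have := cyclotomic_prime_pow_mul_X_pow_sub_one ℚ 2 2
          norm_num at this
          rw [← this])
        (by rw [natDegree_cyclotomic]; decide) hord
      norm_num at this
    have h9 : ¬ 9 ∣ n := by
      intro hd
      have hord : orderOf (M ^ (n / 9)) = 9 := aux_order_pow M n 9 hM hd hg
      have : (9 : ℕ) ∣ 3 := aux_no_order_cyclo _ 9 3 (by norm_num)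
        (by
          have := cyclotomic_prime_pow_mul_X_pow_sub_one ℚ 3 1
          norm_num at this
          rw [← this])
        (by rw [natDegree_cyclotomic]; decide) hord
      norm_num at this
    have h12 : ¬ 12 ∣ n := by
      intro hd
      exact aux_no_order_12 (M ^ (n / 12)) (aux_order_pow M n 12 hM hd hg)
    exact aux_nat_comb n hg hbig h8 h9 h12
  · intro n hnmem
    simp only [Set.mem_insert_iff, Set.mem_singleton_iff] at hnmem
    rcases hnmem with rfl | rfl | rfl | rfl | rfl
    · exact ⟨1, orderOf_one⟩
    · refine ⟨-1, ?_⟩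
      rw [orderOf_eq_iff (by norm_num)]
      refine ⟨by rw [aux_gl_pow_eq_one_iff]; decide, fun m hm hm0 => ?_⟩
      rw [Ne, aux_gl_pow_eq_one_iff]
      interval_cases m <;> decide
    · refine ⟨auxA3, ?_⟩
      rw [orderOf_eq_iff (by norm_num)]
      refine ⟨by rw [aux_gl_pow_eq_one_iff]; decide, fun m hm hm0 => ?_⟩
      rw [Ne, aux_gl_pow_eq_one_iff]
      interval_cases m <;> decide
    · refine ⟨auxA4, ?_⟩
      rw [orderOf_eq_iff (by norm_num)]
      refine ⟨by rw [aux_gl_pow_eq_one_iff]; decide, fun m hm hm0 => ?_⟩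
      rw [Ne, aux_gl_pow_eq_one_iff]
      interval_cases m <;> decide
    · refine ⟨-auxA3, ?_⟩
      rw [orderOf_eq_iff (by norm_num)]
      refine ⟨by rw [aux_gl_pow_eq_one_iff]; decide, fun m hm hm0 => ?_⟩
      rw [Ne, aux_gl_pow_eq_one_iff]
      interval_cases m <;> decide
end
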